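/- arXiv:1312.6193 — 4 statements merged into one kernel-verified Lean document; each statement's English description precedes it below -/
import Mathlib

section
/- Let n ≥ 2 and let x = (x_1,…,x_n) ∈ ℝ^n be a point on the unit sphere Σ_{i=1}^n x_i² = 1 at which v_n attains a local extremum relative to the unit sphere, and suppose v_n(x) ≠ 0. Then Σ_{i=1}^{n} x_i = 0, i.e. x lies in the hyperplane x_1 + x_2 + ⋯ + x_n = 0. -/
/-!
Lagrange multipliers. `vandDet n` is invariant under translation along `(1, …, 1)` and
homogeneous of degree `n.choose 2`, so its gradient `g` at `x` satisfies `⟪g, 1⟫ = 0` and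
`⟪g, x⟫ = n.choose 2 * vandDet n x`. Pairing a Lagrange relation `a • 2x + b • g = 0` with `x`
gives `2a + b * n.choose 2 * vandDet n x = 0`, which forces `a ≠ 0` since `vandDet n x ≠ 0`;
pairing it with `1` gives `2a * ∑ i, x i = 0`.
-/

open Filter Topology

/-- The Vandermonde determinant `v_n(x) = ∏_{1 ≤ i < j ≤ n} (x_j - x_i)`. -/
noncomputable def vandDet (n : ℕ) (x : Fin n → ℝ) : ℝ :=
  ∏ i : Fin n, ∏ j ∈ Finset.Ioi i, (x j - x i)

open Finset

lemma Fin.sum_card_Ioi (n : ℕ) : ∑ i : Fin n, #(Ioi i) = n.choose 2 := by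
  simp only [Fin.card_Ioi]
  rw [Fin.sum_univ_eq_sum_range (fun i => n - 1 - i), sum_range_reflect (fun i => i) n,
    sum_range_id, Nat.choose_two_right]

lemma vandDet_mul_add (n : ℕ) (c d : ℝ) (x : Fin n → ℝ) :
    vandDet n (fun i => c * x i + d) = c ^ n.choose 2 * vandDet n x := by
  unfold vandDet
  rw [← Fin.sum_card_Ioi, ← prod_pow_eq_pow_sum, ← prod_mul_distrib]
  refine prod_congr rfl fun i _ => ?_
  rw [← prod_const, ← prod_mul_distrib]
  exact prod_congr rfl fun j _ => by ring

lemma contDiff_vandDet (n : ℕ) : ContDiff ℝ 1 (vandDet n) := by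
  unfold vandDet
  fun_prop

lemma hasLineDerivAt_vandDet_one (n : ℕ) (x : Fin n → ℝ) :
    HasLineDerivAt ℝ (vandDet n) 0 x 1 := by
  have h_const : (fun t : ℝ => vandDet n (x + t • 1)) = fun _ => vandDet n x := by
    funext t
    calc vandDet n (x + t • 1) = vandDet n (fun i => 1 * x i + t) := by congr 1; ext; simp
      _ = vandDet n x := by rw [vandDet_mul_add, one_pow, one_mul]
  unfold HasLineDerivAt
  rw [h_const]
  exact hasDerivAt_const 0 (vandDet n x)

lemma hasLineDerivAt_vandDet_self (n : ℕ) (x : Fin n → ℝ) :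
    HasLineDerivAt ℝ (vandDet n) (n.choose 2 * vandDet n x) x x := by
  have h_homog : (fun t : ℝ => vandDet n (x + t • x))
      = fun t => (1 + t) ^ n.choose 2 * vandDet n x := by
    funext t
    calc vandDet n (x + t • x) = vandDet n (fun i => (1 + t) * x i + 0) := by
          congr 1; ext; simp; ring
      _ = (1 + t) ^ n.choose 2 * vandDet n x := vandDet_mul_add n (1 + t) 0 x
  unfold HasLineDerivAt
  rw [h_homog]
  simpa using (((hasDerivAt_id (0 : ℝ)).const_add 1).pow (n.choose 2)).mul_const (vandDet n x)

lemma hasLineDerivAt_sum_sq {ι : Type*} [Fintype ι] (x v : ι → ℝ) :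
    HasLineDerivAt ℝ (fun y : ι → ℝ => ∑ i, y i ^ 2) (2 * ∑ i, x i * v i) x v := by
  unfold HasLineDerivAt
  rw [mul_sum]
  refine HasDerivAt.fun_sum fun i _ => ?_
  exact ((((hasDerivAt_id' (0 : ℝ)).mul_const (v i)).const_add (x i)).fun_pow 2).congr_deriv
    (by simp; ring)

/-- If `x` lies on the unit sphere, is a local extremum of `vₙ` relative to the unit sphere
and `vₙ(x) ≠ 0`, then `x` lies in the hyperplane `x₁ + ⋯ + xₙ = 0`. -/
theorem vandermonde_extremum_mem_hyperplane (n : ℕ) (hn : 2 ≤ n) (x : Fin n → ℝ)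
    (hsphere : ∑ i : Fin n, x i ^ 2 = 1)
    (hextr : IsLocalExtrOn (vandDet n) {y : Fin n → ℝ | ∑ i : Fin n, y i ^ 2 = 1} x)
    (hne : vandDet n x ≠ 0) :
    ∑ i : Fin n, x i = 0 := by
  set φ : (Fin n → ℝ) → ℝ := fun y => ∑ i, y i ^ 2
  have hφ : ContDiff ℝ 1 φ := by fun_prop
  have hv := contDiff_vandDet n
  rw [← hsphere] at hextr
  obtain ⟨a, b, hab, hLagrange⟩ := hextr.exists_multipliers_of_hasStrictFDerivAt_1d
    (hφ.contDiffAt.hasStrictFDerivAt one_ne_zero) (hv.contDiffAt.hasStrictFDerivAt one_ne_zero)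
  have hφ' := (hφ.differentiable one_ne_zero x).hasFDerivAt
  have hv' := (hv.differentiable one_ne_zero x).hasFDerivAt
  have hφ_one : fderiv ℝ φ x 1 = 2 * ∑ i, x i := by
    simpa using (hφ'.hasLineDerivAt 1).unique (hasLineDerivAt_sum_sq x 1)
  have hφ_self : fderiv ℝ φ x x = 2 := by
    simpa [← sq, hsphere] using (hφ'.hasLineDerivAt x).unique (hasLineDerivAt_sum_sq x x)
  have hv_one := (hv'.hasLineDerivAt 1).unique (hasLineDerivAt_vandDet_one n x)
  have hv_self := (hv'.hasLineDerivAt x).unique (hasLineDerivAt_vandDet_self n x)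
  have h_one : a * (2 * ∑ i, x i) = 0 := by
    simpa [hφ_one, hv_one] using DFunLike.congr_fun hLagrange 1
  have h_self : a * 2 + b * (n.choose 2 * vandDet n x) = 0 := by
    simpa [hφ_self, hv_self] using DFunLike.congr_fun hLagrange x
  by_contra hs
  have ha : a = 0 := by simpa [hs] using h_one
  have hb : b = 0 := by
    simpa [ha, hne, (Nat.choose_pos hn).ne'] using h_self
  exact hab (by simp [ha, hb])
end

section
/- Let n ≥ 2 and let x_1, …, x_n be pairwise distinct real numbers. Then the squared norm of the gradient of the Vandermonde determinant satisfies Σ_{i=1}^{n} (∂v_n/∂x_i)² = 2 · v_n(x_1,…,x_n)² · Σ_{1≤i<j≤n} 1/(x_j − x_i)². -/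
/-- Partial derivative of a function on `ℝ^n` with respect to the `k`-th coordinate. -/
noncomputable def pder (n : ℕ) (k : Fin n) (f : (Fin n → ℝ) → ℝ) (x : Fin n → ℝ) : ℝ :=
  fderiv ℝ f x (Pi.single k 1)

/-!
Since `v` is a product of the linear forms `x_j - x_i`, its logarithmic derivative gives
`∂_k v = v · ∑_{i ≠ k} 1 / (x_k - x_i)`. Squaring and summing over `k`, the cross terms
`1 / ((x_k - x_i) (x_k - x_j))` with `k, i, j` distinct cancel in cyclic triples, by the
partial-fraction identity `1/((a-b)(a-c)) + 1/((b-c)(b-a)) + 1/((c-a)(c-b)) = 0`. What is left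
is `∑_{k ≠ i} 1 / (x_k - x_i)^2 = 2 ∑_{i < j} 1 / (x_j - x_i)^2`.
-/

open Finset

section Sums

variable {ι M : Type*} [Fintype ι] [AddCommMonoid M]

theorem Finset.sum_sum_eq_sum_Ioi_add_swap_add_sum_diag [LinearOrder ι]
    [LocallyFiniteOrderTop ι] [LocallyFiniteOrderBot ι] (f : ι → ι → M) :
    ∑ i, ∑ j, f i j = ∑ i, ∑ j ∈ Ioi i, (f i j + f j i) + ∑ i, f i i := by
  have hsplit (i : ι) : ∑ j, f i j = ∑ j ∈ Ioi i, f i j + ∑ j ∈ Iio i, f i j + f i i := by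
    rw [Fintype.sum_eq_add_sum_compl i, ← Ioi_disjUnion_Iio, sum_disjUnion, add_comm]
  have hswap : ∑ i, ∑ j ∈ Iio i, f i j = ∑ i, ∑ j ∈ Ioi i, f j i :=
    sum_comm' fun _ _ => by simp
  simp only [hsplit, sum_add_distrib, hswap]

theorem Finset.sum_sum_sum_rotate (F : ι → ι → ι → M) :
    ∑ k, ∑ i, ∑ j, F k i j = ∑ k, ∑ i, ∑ j, F i j k :=
  (sum_congr rfl fun _ _ => sum_comm).trans sum_comm

theorem Finset.sq_sum_eq_sum_sq_add_sum_sum_ite_ne {R : Type*} [DecidableEq ι] [CommSemiring R]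
    (b : ι → R) :
    (∑ i, b i) ^ 2 = ∑ i, b i ^ 2 + ∑ i, ∑ j, if i = j then 0 else b i * b j := by
  have hsplit (i j : ι) :
      b i * b j = (if i = j then b i ^ 2 else 0) + if i = j then 0 else b i * b j := by
    split_ifs with h <;> simp [h, sq]
  rw [sq, sum_mul_sum, ← sum_add_distrib]
  refine sum_congr rfl fun i _ => ?_
  rw [sum_congr rfl fun j _ => hsplit i j, sum_add_distrib, sum_ite_eq, if_pos (mem_univ i)]

end Sums

theorem HasFDerivAt.finsetProd_of_ne_zero {ι 𝕜 E : Type*} [NontriviallyNormedField 𝕜]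
    [NormedAddCommGroup E] [NormedSpace 𝕜 E] [DecidableEq ι] {u : Finset ι} {g : ι → E → 𝕜}
    {g' : ι → E →L[𝕜] 𝕜} {x : E} (hg : ∀ i ∈ u, HasFDerivAt (g i) (g' i) x)
    (hg₀ : ∀ i ∈ u, g i x ≠ 0) :
    HasFDerivAt (∏ i ∈ u, g i ·) ((∏ i ∈ u, g i x) • ∑ i ∈ u, (g i x)⁻¹ • g' i) x := by
  refine (HasFDerivAt.finsetProd hg).congr_fderiv ?_
  rw [Finset.smul_sum]
  refine sum_congr rfl fun i hi => ?_
  rw [smul_smul, ← prod_erase_mul _ _ hi, mul_inv_cancel_right₀ (hg₀ i hi)]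

section InvSub

variable {ι K : Type*} [Field K]

theorem inv_sub_mul_inv_sub_add_rotate {a b c : K} (hab : a ≠ b) (hbc : b ≠ c) (hca : c ≠ a) :
    (a - b)⁻¹ * (a - c)⁻¹ + (b - c)⁻¹ * (b - a)⁻¹ + (c - a)⁻¹ * (c - b)⁻¹ = 0 := by
  have hab' := sub_ne_zero.2 hab
  have hbc' := sub_ne_zero.2 hbc
  have hca' := sub_ne_zero.2 hca
  field_simp
  ring

theorem sum_sum_sum_ite_ne_inv_sub_mul_inv_sub [Fintype ι] [DecidableEq ι] [CharZero K]
    {x : ι → K} (hx : Function.Injective x) :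
    ∑ k, ∑ i, ∑ j, (if i = j then 0 else (x k - x i)⁻¹ * (x k - x j)⁻¹) = 0 := by
  set F : ι → ι → ι → K := fun k i j => if i = j then 0 else (x k - x i)⁻¹ * (x k - x j)⁻¹
  -- If two indices coincide, each term is cut off by the `if` or has a factor `0⁻¹ = 0`.
  have hrotate (k i j : ι) : F k i j + F i j k + F j k i = 0 := by
    by_cases hki : k = i
    · subst hki; simp [F]
    by_cases hij : i = j
    · subst hij; simp [F]
    by_cases hjk : j = k
    · subst hjk; simp [F]
    simpa [F, hki, hij, hjk, Ne.symm] using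
      inv_sub_mul_inv_sub_add_rotate (hx.ne hki) (hx.ne hij) (hx.ne hjk)
  have h3 : 3 * ∑ k, ∑ i, ∑ j, F k i j = 0 :=
    calc 3 * ∑ k, ∑ i, ∑ j, F k i j
        = ∑ k, ∑ i, ∑ j, F k i j + ∑ k, ∑ i, ∑ j, F i j k + ∑ k, ∑ i, ∑ j, F j k i := by
          rw [← sum_sum_sum_rotate, ← sum_sum_sum_rotate (fun k i j => F i j k)]
          ring
      _ = 0 := by simp only [← sum_add_distrib, hrotate, sum_const_zero]
  simpa using h3

theorem sum_sum_inv_sub_sq [Fintype ι] [LinearOrder ι] [LocallyFiniteOrderTop ι]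
    [LocallyFiniteOrderBot ι] (x : ι → K) :
    ∑ k, ∑ i, ((x k - x i)⁻¹) ^ 2 = 2 * ∑ i, ∑ j ∈ Ioi i, 1 / (x j - x i) ^ 2 := by
  rw [sum_sum_eq_sum_Ioi_add_swap_add_sum_diag, mul_sum]
  simp only [sub_self, inv_zero, zero_pow two_ne_zero, sum_const_zero, add_zero, mul_sum]
  refine sum_congr rfl fun i _ => sum_congr rfl fun j _ => ?_
  rw [← neg_sub (x j) (x i), inv_neg, neg_sq, ← two_mul, one_div, inv_pow]

end InvSub

section Vandermonde

variable {n : ℕ} {x : Fin n → ℝ}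

theorem fderiv_vandDet_apply (hx : Function.Injective x) (v : Fin n → ℝ) :
    fderiv ℝ (vandDet n) x v = vandDet n x * ∑ i, ∑ j ∈ Ioi i, (v j - v i) / (x j - x i) := by
  have hfactor (i : Fin n) : ∀ j ∈ Ioi i, x j - x i ≠ 0 := fun j hj =>
    sub_ne_zero.2 (hx.ne (mem_Ioi.1 hj).ne')
  have hrow (i : Fin n) :=
    HasFDerivAt.finsetProd_of_ne_zero (g := fun j (y : Fin n → ℝ) => y j - y i)
      (fun j _ => (hasFDerivAt_apply j x).sub (hasFDerivAt_apply i x)) (hfactor i)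
  have hprod := HasFDerivAt.finsetProd_of_ne_zero (u := univ) (fun i _ => hrow i)
    (fun i _ => prod_ne_zero_iff.2 (hfactor i))
  rw [(show HasFDerivAt (vandDet n) _ x from hprod).fderiv]
  simp [inv_smul_smul₀ (prod_ne_zero_iff.2 (hfactor _)), div_eq_inv_mul, vandDet]

-- The sum runs over all `i`: the term `i = k` is `0⁻¹ = 0`.
theorem pder_vandDet (hx : Function.Injective x) (k : Fin n) :
    pder n k (vandDet n) x = vandDet n x * ∑ i, (x k - x i)⁻¹ := by
  set e : Fin n → ℝ := Pi.single k 1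
  have hpair (i j : Fin n) :
      e j / (x j - x i) + e i / (x i - x j) = (e j - e i) / (x j - x i) := by
    rw [← neg_sub (x j), div_neg, ← sub_eq_add_neg, sub_div]
  have hsum := sum_sum_eq_sum_Ioi_add_swap_add_sum_diag fun i j => e j / (x j - x i)
  simp only [hpair, sub_self, div_zero, sum_const_zero, add_zero] at hsum
  rw [pder, fderiv_vandDet_apply hx, ← hsum]
  simp [e, Pi.single_apply, div_eq_mul_inv]

end Vandermonde

theorem vandermonde_gradient_norm_sq_general (n : ℕ) (x : Fin n → ℝ)
    (hx : Function.Injective x) :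
    ∑ i : Fin n, (pder n i (vandDet n) x) ^ 2 =
      2 * (vandDet n x) ^ 2 * ∑ i : Fin n, ∑ j ∈ Finset.Ioi i, 1 / (x j - x i) ^ 2 := by
  calc ∑ k, pder n k (vandDet n) x ^ 2
      = vandDet n x ^ 2 * ∑ k, (∑ i, (x k - x i)⁻¹) ^ 2 := by
        rw [mul_sum]
        simp only [pder_vandDet hx, mul_pow]
    _ = vandDet n x ^ 2 * ∑ k, ∑ i, ((x k - x i)⁻¹) ^ 2 := by
        simp only [sq_sum_eq_sum_sq_add_sum_sum_ite_ne, sum_add_distrib,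
          sum_sum_sum_ite_ne_inv_sub_mul_inv_sub hx, add_zero]
    _ = _ := by rw [sum_sum_inv_sub_sq]; ring

/-- For `n ≥ 2` and pairwise distinct `x₁, …, xₙ`, the squared norm of the gradient of the
Vandermonde determinant satisfies
`∑_{i=1}^n (∂vₙ/∂x_i)² = 2 vₙ(x)² ∑_{1 ≤ i < j ≤ n} 1/(x_j - x_i)²`. -/
theorem vandermonde_gradient_norm_sq (n : ℕ) (hn : 2 ≤ n) (x : Fin n → ℝ)
    (hx : Function.Injective x) :
    ∑ i : Fin n, (pder n i (vandDet n) x) ^ 2 =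
      2 * (vandDet n x) ^ 2 * ∑ i : Fin n, ∑ j ∈ Finset.Ioi i, 1 / (x j - x i) ^ 2 :=
  vandermonde_gradient_norm_sq_general n x hx
end

section
/- Let n ≥ 1, let x, a ∈ ℂ^n with x_j ≠ 0 for all j, and for integers k ≥ n let Q_{kn} be the set of strictly increasing n-tuples q = (q_1 < q_2 < ⋯ < q_n) of integers with 1 ≤ q_1 and q_n = k. Then the determinant g_n(x,a) = det (x_j^{a_i})_{n×n} equals the convergent series Σ_{k=n}^{∞} Σ_{q ∈ Q_{kn}} det((a_i^{q_j−1})_{1≤i,j≤n}) · (∏_{l=1}^{n} 1/(q_l − 1)!) · det(((log x_j)^{q_i−1})_{1≤i,j≤n}), where convergence means the partial sums over k = n, …, K tend to g_n(x,a) as K → ∞ and log denotes the principal branch of the complex logarithm. -/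
/-!
The partial sums of the exponential series give `x_j^{a_i} = exp(a_i log x_j)` as the limit of
`∑_{p < K} a_i^p (log x_j)^p / p!`, which is the `(i, j)` entry of the product of the `n × K` matrix
`(a_i^p)` with the `K × n` matrix `((log x_j)^p / p!)`. The Cauchy–Binet formula expands the
determinant of this product as a sum over strictly increasing `q : Fin n → Fin K`; grouping the
`q` by their largest value `q_n` gives the partial sum of the series up to `K`, and continuity of
the determinant passes to the limit.
-/

open Filter Topology Finset

open Classical in
theorem Finset.sum_injective_eq_sum_strictMono_perm {ι M : Type*} [Fintype ι] [LinearOrder ι]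
    [AddCommMonoid M] {n : ℕ} (g : (Fin n → ι) → M) :
    ∑ f ∈ univ.filter (fun f : Fin n → ι => Function.Injective f), g f =
      ∑ q ∈ univ.filter (fun q : Fin n → ι => StrictMono q),
        ∑ σ : Equiv.Perm (Fin n), g (q ∘ σ) := by
  rw [← sum_product']
  symm
  refine sum_nbij' (fun p => p.1 ∘ p.2) (fun f => (f ∘ Tuple.sort f, (Tuple.sort f)⁻¹))
    ?_ ?_ ?_ ?_ fun _ _ => rfl
  · rintro ⟨q, σ⟩ hq
    simp only [mem_product, mem_filter, mem_univ, and_true, true_and] at hq ⊢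
    exact hq.injective.comp σ.injective
  · intro f hf
    simp only [mem_product, mem_filter, mem_univ, and_true, true_and] at hf ⊢
    exact (Tuple.monotone_sort f).strictMono_of_injective (hf.comp (Tuple.sort f).injective)
  · rintro ⟨q, σ⟩ hq
    simp only [mem_product, mem_filter, mem_univ, and_true, true_and] at hq
    have hsort : q ∘ σ ∘ Tuple.sort (q ∘ σ) = q := by
      have := Tuple.comp_perm_comp_sort_eq_comp_sort (f := q) (σ := σ)
      rwa [Tuple.sort_eq_refl_iff_monotone.2 hq.monotone] at this
    have hσ : σ * Tuple.sort (q ∘ σ) = 1 :=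
      Equiv.ext fun i => hq.injective (congrFun hsort i)
    simp only [Prod.mk.injEq]
    exact ⟨hsort, (eq_inv_of_mul_eq_one_left hσ).symm⟩
  · intro f _
    funext i
    simp

theorem Fin.le_val_last_of_strictMono {N K : ℕ} {q : Fin (N + 1) → Fin K} (hq : StrictMono q) :
    N ≤ q (Fin.last N) := by
  simpa using card_le_card_of_injOn q (s := univ) (t := Iic (q (last N)))
    (fun i _ => mem_Iic.2 (hq.monotone (le_last i))) hq.injective.injOn

open Classical in
theorem Finset.sum_strictMono_eq_sum_Icc_sum_last {M : Type*} [AddCommMonoid M] (N K : ℕ)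
    (g : (Fin (N + 1) → Fin K) → M) :
    ∑ q ∈ univ.filter (fun q : Fin (N + 1) → Fin K => StrictMono q), g q =
      ∑ k ∈ Icc (N + 1) K, ∑ q ∈ univ.filter
        (fun q : Fin (N + 1) → Fin K => StrictMono q ∧ (q (Fin.last N) : ℕ) + 1 = k), g q := by
  rw [← sum_fiberwise_of_maps_to (t := Icc (N + 1) K) (g := fun q => (q (Fin.last N) : ℕ) + 1)]
  · simp only [filter_filter]
  · intro q hq
    have hN := Fin.le_val_last_of_strictMono (mem_filter.1 hq).2
    have hK := (q (Fin.last N)).isLt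
    simp only [mem_Icc]
    omega

open Classical in
theorem Finset.sum_strictMono_last_castLE {M : Type*} [AddCommMonoid M] {N k K : ℕ} (hk : k ≤ K)
    (F : (Fin (N + 1) → ℕ) → M) :
    ∑ q ∈ univ.filter
        (fun q : Fin (N + 1) → Fin k => StrictMono q ∧ (q (Fin.last N) : ℕ) = k - 1),
      F (fun l => q l) =
    ∑ q ∈ univ.filter
        (fun q : Fin (N + 1) → Fin K => StrictMono q ∧ (q (Fin.last N) : ℕ) + 1 = k),
      F (fun l => q l) := by
  refine sum_bij' (fun q _ => Fin.castLE hk ∘ q)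
    (fun q hq l => ⟨q l, ?_⟩) ?_ ?_ (fun _ _ => rfl) (fun _ _ => rfl) (fun _ _ => rfl)
  · obtain ⟨hmono, hlast⟩ := (mem_filter.1 hq).2
    have hl : (q l : ℕ) ≤ q (Fin.last N) := hmono.monotone (Fin.le_last l)
    omega
  · intro q hq
    obtain ⟨hmono, hlast⟩ := (mem_filter.1 hq).2
    have hlt := (q (Fin.last N)).isLt
    simp only [mem_filter, mem_univ, true_and, Function.comp_apply, Fin.val_castLE]
    exact ⟨(Fin.strictMono_castLE hk).comp hmono, by omega⟩
  · intro q hq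
    obtain ⟨hmono, hlast⟩ := (mem_filter.1 hq).2
    simp only [mem_filter, mem_univ, true_and]
    exact ⟨fun i j hij => hmono hij, show (q (Fin.last N) : ℕ) = k - 1 by omega⟩

namespace Matrix

variable {R : Type*} [CommRing R]

theorem det_mul_eq_sum_prod_mul_det_submatrix {ι : Type*} [Fintype ι] {n : ℕ}
    (A : Matrix (Fin n) ι R) (B : Matrix ι (Fin n) R) :
    det (A * B) = ∑ f : Fin n → ι, (∏ i, B (f i) i) * det (A.submatrix id f) := by
  classical
  simp only [det_apply', mul_apply, prod_univ_sum, mul_sum, Fintype.piFinset_univ,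
    submatrix_apply, id_eq]
  rw [sum_comm]
  refine sum_congr rfl fun f _ => sum_congr rfl fun σ _ => ?_
  rw [prod_mul_distrib]
  ring

theorem det_submatrix_eq_zero_of_not_injective {m ι : Type*} [Fintype m] [DecidableEq m]
    (A : Matrix m ι R) {f : m → ι} (hf : ¬ Function.Injective f) :
    det (A.submatrix id f) = 0 := by
  obtain ⟨i, j, hij, hne⟩ : ∃ i j, f i = f j ∧ i ≠ j := by
    simpa [Function.Injective] using hf
  exact det_zero_of_column_eq hne fun k => by simp [hij]

open Classical in
theorem det_mul_eq_sum_strictMono {ι : Type*} [Fintype ι] [LinearOrder ι] {n : ℕ}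
    (A : Matrix (Fin n) ι R) (B : Matrix ι (Fin n) R) :
    det (A * B) = ∑ q ∈ univ.filter (fun q : Fin n → ι => StrictMono q),
      det (A.submatrix id q) * det (B.submatrix q id) := by
  rw [det_mul_eq_sum_prod_mul_det_submatrix,
    ← sum_filter_of_ne (p := Function.Injective) fun f _ hf => ?_,
    sum_injective_eq_sum_strictMono_perm]
  · refine sum_congr rfl fun q _ => ?_
    rw [det_apply' (B.submatrix q id), mul_sum]
    refine sum_congr rfl fun σ _ => ?_
    rw [show A.submatrix id (q ∘ σ) = (A.submatrix id q).submatrix id σ from rfl, det_permute']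
    simp only [submatrix_apply, id_eq, Function.comp_apply]
    ring
  · by_contra hninj
    rw [det_submatrix_eq_zero_of_not_injective A hninj, mul_zero] at hf
    exact hf rfl

open Nat

theorem of_pow_mul_of_pow_div_factorial {𝕜 m n : Type*} [Field 𝕜] (a : m → 𝕜) (b : n → 𝕜)
    (K : ℕ) :
    (of fun i (p : Fin K) => a i ^ (p : ℕ)) * (of fun (p : Fin K) j => b j ^ (p : ℕ) / (p ! : 𝕜)) =
      of fun i j => ∑ p ∈ range K, (a i * b j) ^ p / (p ! : 𝕜) := by
  ext i j
  rw [mul_apply, of_apply, ← Fin.sum_univ_eq_sum_range]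
  refine sum_congr rfl fun p _ => ?_
  simp only [of_apply, mul_pow, mul_div_assoc]

theorem tendsto_det_of_pow_mul_of_pow_div_factorial {n : Type*} [Fintype n] [DecidableEq n]
    (a b : n → ℂ) :
    Tendsto (fun K : ℕ => det ((of fun i (p : Fin K) => a i ^ (p : ℕ)) *
        (of fun (p : Fin K) j => b j ^ (p : ℕ) / (p ! : ℂ))))
      atTop (𝓝 (det (of fun i j => Complex.exp (a i * b j)))) := by
  simp only [of_pow_mul_of_pow_div_factorial]
  refine (continuous_id.matrix_det.tendsto _).comp (tendsto_pi_nhds.2 fun i =>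
    tendsto_pi_nhds.2 fun j => ?_)
  rw [Complex.exp_eq_exp_ℂ]
  exact (NormedSpace.expSeries_div_hasSum_exp (a i * b j)).tendsto_sum_nat

end Matrix

open Classical in
/-- `Q_{kn}` is encoded zero-indexed: `q l : Fin k` stands for `q_l - 1`, so the condition
`(q (Fin.last N) : ℕ) = k - 1` says `q_n = k`. -/
theorem generalizedVandermondeDet_series_general (N : ℕ) (x a : Fin (N + 1) → ℂ) :
    Tendsto
      (fun K : ℕ => ∑ k ∈ Finset.Icc (N + 1) K,
        ∑ q ∈ Finset.univ.filter
            (fun q : Fin (N + 1) → Fin k => StrictMono q ∧ (q (Fin.last N) : ℕ) = k - 1),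
          Matrix.det (Matrix.of fun i j : Fin (N + 1) => a i ^ ((q j : ℕ))) *
            (∏ l : Fin (N + 1), (1 : ℂ) / (((q l : ℕ).factorial : ℂ))) *
            Matrix.det (Matrix.of fun i j : Fin (N + 1) => (Complex.log (x j)) ^ ((q i : ℕ))))
      atTop
      (𝓝 (Matrix.det
        (Matrix.of fun i j : Fin (N + 1) => Complex.exp (a i * Complex.log (x j))))) := by
  set L := fun j => Complex.log (x j)
  set F := fun v : Fin (N + 1) → ℕ => Matrix.det (Matrix.of fun i j => a i ^ v j) *
    (∏ l, (1 : ℂ) / ((v l).factorial : ℂ)) * Matrix.det (Matrix.of fun i j => L j ^ v i)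
  refine (Matrix.tendsto_det_of_pow_mul_of_pow_div_factorial a L).congr fun K => ?_
  rw [Matrix.det_mul_eq_sum_strictMono, sum_strictMono_eq_sum_Icc_sum_last]
  refine sum_congr rfl fun k hk => ?_
  refine Eq.trans ?_ (sum_strictMono_last_castLE (mem_Icc.1 hk).2 F).symm
  refine sum_congr rfl fun q _ => ?_
  have hrows :
      (Matrix.of fun (p : Fin K) j => L j ^ (p : ℕ) / ((p : ℕ).factorial : ℂ)).submatrix q id =
        Matrix.diagonal (fun i => 1 / ((q i : ℕ).factorial : ℂ)) *
          Matrix.of fun i j => L j ^ (q i : ℕ) := by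
    ext i j
    simp only [Matrix.submatrix_apply, Matrix.of_apply, id_eq, Matrix.diagonal_mul]
    ring
  rw [hrows, Matrix.det_mul, Matrix.det_diagonal, ← mul_assoc]
  rfl

open Classical in
/-- For `n = N + 1 ≥ 1` and `x, a ∈ ℂⁿ` with all `x_j ≠ 0`, the generalized Vandermonde
determinant `g_n(x, a) = det(x_j^{a_i})` equals the convergent series
`∑_{k=n}^∞ ∑_{q ∈ Q_{kn}} det((a_i^{q_j - 1})) (∏_l 1/(q_l - 1)!) det(((log x_j)^{q_i - 1}))`,
where `Q_{kn}` is the set of strictly increasing `n`-tuples `q` with `1 ≤ q_1` and `q_n = k`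
(here encoded zero-indexed: `q : Fin n → Fin k` strictly monotone with `(q_n : ℕ) = k - 1`,
so that the one-indexed value `q_l` corresponds to `(q l : ℕ) + 1`). -/
theorem generalizedVandermondeDet_series (N : ℕ) (x a : Fin (N + 1) → ℂ)
    (hx : ∀ j, x j ≠ 0) :
    Tendsto
      (fun K : ℕ => ∑ k ∈ Finset.Icc (N + 1) K,
        ∑ q ∈ Finset.univ.filter
            (fun q : Fin (N + 1) → Fin k => StrictMono q ∧ (q (Fin.last N) : ℕ) = k - 1),
          Matrix.det (Matrix.of fun i j : Fin (N + 1) => a i ^ ((q j : ℕ))) *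
            (∏ l : Fin (N + 1), (1 : ℂ) / (((q l : ℕ).factorial : ℂ))) *
            Matrix.det (Matrix.of fun i j : Fin (N + 1) => (Complex.log (x j)) ^ ((q i : ℕ))))
      atTop
      (𝓝 (Matrix.det
        (Matrix.of fun i j : Fin (N + 1) => Complex.exp (a i * Complex.log (x j))))) :=
  generalizedVandermondeDet_series_general N x a
end

section
/- Let n ≥ 2 and let x, a ∈ ℂ^n with x_j ≠ 0 for all j and v_n(a) := ∏_{1≤i<j≤n}(a_j − a_i) ≠ 0. Then, as t → 0 (t ∈ ℂ, t ≠ 0), the ratio g_n(x, a·t) / v_n(a·t) tends to (∏_{k=1}^{n} 1/(k−1)!) · ∏_{1≤i<j≤n} (log x_j − log x_i), where a·t = (a_1 t, …, a_n t) and log is the principal branch of the complex logarithm. -/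
/-!
Expanding the determinant over permutations, `det (exp (t aᵢ log xⱼ)) = ∑_σ sgn σ exp (t c_σ)` with
`c_σ = ∑ᵢ a_{σ i} log xᵢ`. By the multinomial theorem the alternating power sum
`∑_σ sgn σ c_σ ^ k` is a combination of the determinants `det (a_p ^ f_q)` over exponent vectors
`f` with `∑ f = k`. These vanish unless `f` is injective, which forces `k ≥ N = ∑_{i<n} i`, with
equality exactly when `f` is a permutation of `(0, …, n-1)`. So the Taylor expansion of the
determinant starts with `t ^ N v(a) v(log x) / ∏ₖ k!`, while the denominator is `v(a) t ^ N`.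
-/

open Filter Topology Finset Matrix Equiv Asymptotics

open Nat in
theorem Nat.cast_multinomial_div_factorial_sum {α K : Type*} [Field K] [CharZero K]
    (s : Finset α) (f : α → ℕ) :
    (multinomial s f : K) / (∑ i ∈ s, f i)! = ∏ i ∈ s, 1 / ((f i)! : K) := by
  rw [← multinomial_spec s f, cast_mul, cast_prod,
    div_mul_cancel_right₀ (cast_ne_zero.mpr (multinomial_pos s f).ne'), ← prod_inv_distrib]
  simp only [one_div]

theorem Fin.exists_perm_eq_val_of_injective_of_sum_le {n : ℕ} {f : Fin n → ℕ}
    (hf : Function.Injective f) (hsum : ∑ i, f i ≤ ∑ i : Fin n, (i : ℕ)) :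
    ∃ π : Perm (Fin n), f = fun i => (π i : ℕ) := by
  have hcard : #(univ.image f) = n := by
    rw [card_image_of_injective _ hf, card_univ, Fintype.card_fin]
  set g := (univ.image f).orderEmbOfFin hcard
  have hval_le : ∀ i : Fin n, (i : ℕ) ≤ g i := by
    rintro ⟨i, hi⟩
    induction i with
    | zero => exact Nat.zero_le _
    | succ i ih =>
      have hlt : g ⟨i, by omega⟩ < g ⟨i + 1, hi⟩ := g.strictMono (Nat.lt_succ_self i)
      exact (ih (by omega)).trans_lt hlt
  have hsum_g : ∑ i, g i = ∑ i, f i := calc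
    ∑ i, g i = ∑ s ∈ univ.image g, s := (sum_image (f := id) fun _ _ _ _ h => g.injective h).symm
    _ = ∑ i, f i := by rw [image_orderEmbOfFin_univ, sum_image fun _ _ _ _ h => hf h]
  have hg : ∀ i : Fin n, (i : ℕ) = g i :=
    fun i => (sum_eq_sum_iff_of_le fun i _ => hval_le i).mp
      (le_antisymm (sum_le_sum fun i _ => hval_le i) (hsum_g ▸ hsum)) i (mem_univ i)
  have hlt : ∀ i, f i < n := by
    intro i
    have hi : f i ∈ univ.image g := by
      rw [image_orderEmbOfFin_univ]
      exact mem_image_of_mem f (mem_univ i)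
    obtain ⟨j, -, hj⟩ := mem_image.mp hi
    rw [← hj, ← hg j]
    exact j.isLt
  exact ⟨Equiv.ofBijective (fun i => ⟨f i, hlt i⟩) (Finite.injective_iff_bijective.mp
    fun i j h => hf (Fin.val_eq_of_eq h)), rfl⟩

namespace Matrix

variable {R : Type*} [CommRing R] {n : ℕ}

theorem det_of_exp_mul {ι : Type*} [Fintype ι] [DecidableEq ι] (b L : ι → ℂ) :
    det (of fun i j => Complex.exp (b i * L j)) =
      ∑ σ : Perm ι, Perm.sign σ * Complex.exp (∑ i, b (σ i) * L i) := by
  simp only [det_apply', of_apply, Complex.exp_sum]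

theorem det_vandermonde_mul_const (v : Fin n → R) (t : R) :
    det (vandermonde fun i => v i * t) = det (vandermonde v) * t ^ ∑ i : Fin n, (i : ℕ) := by
  have : vandermonde (fun i => v i * t) =
      vandermonde v * diagonal fun j : Fin n => t ^ (j : ℕ) := by
    ext i j
    simp [mul_pow]
  rw [this, det_mul, det_diagonal, prod_pow_eq_pow_sum]

theorem det_of_pow_eq_zero_of_not_injective (a : Fin n → R) {f : Fin n → ℕ}
    (hf : ¬Function.Injective f) : det (of fun p q => a p ^ f q) = 0 := by
  obtain ⟨p, q, hfpq, hpq⟩ := Function.not_injective_iff.mp hf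
  exact det_zero_of_column_eq hpq fun r => by simp [hfpq]

theorem det_of_pow_perm (a : Fin n → R) (π : Perm (Fin n)) :
    det (of fun p q => a p ^ (π q : ℕ)) = Perm.sign π * det (vandermonde a) :=
  det_permute' π (vandermonde a)

def alternatingPowerSum (a L : Fin n → R) (k : ℕ) : R :=
  ∑ σ : Perm (Fin n), Perm.sign σ * (∑ i, a (σ i) * L i) ^ k

theorem alternatingPowerSum_eq_sum_piAntidiag (a L : Fin n → R) (k : ℕ) :
    alternatingPowerSum a L k = ∑ f ∈ piAntidiag univ k,
      Nat.multinomial univ f * (∏ i, L i ^ f i) * det (of fun p q => a p ^ f q) := by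
  simp_rw [alternatingPowerSum, sum_pow_eq_sum_piAntidiag, mul_sum]
  rw [sum_comm]
  refine sum_congr rfl fun f _ => ?_
  simp_rw [det_apply', mul_sum, mul_pow, prod_mul_distrib, of_apply]
  exact sum_congr rfl fun σ _ => by ring

theorem alternatingPowerSum_eq_zero_of_lt (a L : Fin n → R) {k : ℕ}
    (hk : k < ∑ i : Fin n, (i : ℕ)) : alternatingPowerSum a L k = 0 := by
  rw [alternatingPowerSum_eq_sum_piAntidiag]
  refine sum_eq_zero fun f hf => ?_
  by_cases hinj : Function.Injective f
  · have hsum := (mem_piAntidiag.mp hf).1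
    obtain ⟨π, rfl⟩ := Fin.exists_perm_eq_val_of_injective_of_sum_le hinj (hsum.trans_le hk.le)
    rw [Equiv.sum_comp π (fun i : Fin n => (i : ℕ))] at hsum
    omega
  · rw [det_of_pow_eq_zero_of_not_injective a hinj, mul_zero]

theorem alternatingPowerSum_sum_val (a L : Fin n → R) :
    alternatingPowerSum a L (∑ i : Fin n, (i : ℕ)) =
      Nat.multinomial univ (fun i : Fin n => (i : ℕ)) * det (vandermonde a) *
        det (vandermonde L) := by
  classical
  rw [alternatingPowerSum_eq_sum_piAntidiag, ← sum_filter_of_ne (p := Function.Injective)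
    fun f _ hne => by_contra fun hinj =>
      hne (by rw [det_of_pow_eq_zero_of_not_injective a hinj, mul_zero])]
  have himage : {f ∈ piAntidiag (univ : Finset (Fin n)) (∑ i : Fin n, (i : ℕ)) |
      Function.Injective f} = univ.image fun π : Perm (Fin n) => fun i => (π i : ℕ) := by
    ext f
    simp only [mem_filter, mem_piAntidiag, mem_image, mem_univ, true_and]
    constructor
    · rintro ⟨⟨hsum, -⟩, hinj⟩
      obtain ⟨π, rfl⟩ := Fin.exists_perm_eq_val_of_injective_of_sum_le hinj hsum.le
      exact ⟨π, rfl⟩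
    · rintro ⟨π, rfl⟩
      exact ⟨⟨Equiv.sum_comp π (fun i : Fin n => (i : ℕ)), fun _ _ => trivial⟩,
        Fin.val_injective.comp π.injective⟩
  rw [himage, sum_image fun π _ π' _ h => Equiv.ext fun i => Fin.val_injective (congrFun h i)]
  have hmultinomial (π : Perm (Fin n)) :
      Nat.multinomial univ (fun i => (π i : ℕ)) =
        Nat.multinomial univ (fun i : Fin n => (i : ℕ)) := by
    simp only [Nat.multinomial, Equiv.sum_comp π (fun i : Fin n => (i : ℕ)),
      Equiv.prod_comp π (fun i : Fin n => (i : ℕ).factorial)]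
  rw [← det_transpose (vandermonde L), det_apply' (vandermonde L)ᵀ, mul_sum]
  refine sum_congr rfl fun π _ => ?_
  rw [hmultinomial, det_of_pow_perm]
  simp only [transpose_apply, vandermonde_apply]
  ring

end Matrix

open Nat in
theorem Complex.isLittleO_exp_mul_sub_sum_range (c : ℂ) (N : ℕ) :
    (fun t : ℂ => Complex.exp (t * c) - ∑ k ∈ range (N + 1), (t * c) ^ k / k !) =o[𝓝 0]
      (· ^ N) := by
  have hc : Tendsto (· * c) (𝓝 (0 : ℂ)) (𝓝 0) :=
    (continuous_mul_const c).tendsto' 0 0 (zero_mul c)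
  refine ((Complex.exp_sub_sum_range_succ_isLittleO_pow N).comp_tendsto hc).trans_isBigO ?_
  exact ((isBigO_refl (· ^ N) (𝓝 (0 : ℂ))).const_mul_left (c ^ N)).congr_left fun t => by
    simp [mul_pow, mul_comm]

open Nat in
theorem Complex.isLittleO_sum_mul_exp_mul_sub {ι : Type*} [Fintype ι] (w c : ι → ℂ) (N : ℕ)
    (hmoment : ∀ k < N, ∑ i, w i * c i ^ k = 0) :
    (fun t : ℂ => ∑ i, w i * Complex.exp (t * c i) - t ^ N * ((∑ i, w i * c i ^ N) / N !))
      =o[𝓝 0] (· ^ N) := by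
  have htaylor (t : ℂ) : ∑ i, w i * ∑ k ∈ range (N + 1), (t * c i) ^ k / k ! =
      t ^ N * ((∑ i, w i * c i ^ N) / N !) := by
    simp_rw [mul_sum, sum_comm (s := univ)]
    rw [sum_range_succ, sum_eq_zero fun k hk => ?_, zero_add]
    · rw [sum_div, mul_sum]
      exact sum_congr rfl fun i _ => by ring
    · have : ∑ i, w i * c i ^ k * (t ^ k / k !) = 0 := by
        rw [← sum_mul, hmoment k (mem_range.mp hk), zero_mul]
      rw [← this]
      exact sum_congr rfl fun i _ => by ring
  refine (IsLittleO.sum (s := univ) fun i _ =>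
    (Complex.isLittleO_exp_mul_sub_sum_range (c i) N).const_mul_left (w i)).congr_left fun t => ?_
  rw [← htaylor, ← sum_sub_distrib]
  simp only [mul_sub, Finset.sum_apply]

theorem tendsto_div_pow_nhdsNE_of_isLittleO {𝕜 : Type*} [NormedField 𝕜] {f : 𝕜 → 𝕜} {K : 𝕜}
    {N : ℕ} (hf : (fun t => f t - t ^ N * K) =o[𝓝 0] (· ^ N)) :
    Tendsto (fun t => f t / t ^ N) (𝓝[≠] 0) (𝓝 K) := by
  have h := (hf.tendsto_div_nhds_zero.mono_left (nhdsWithin_le_nhds (s := {0}ᶜ))).const_add K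
  rw [add_zero] at h
  refine h.congr' (eventually_nhdsWithin_of_forall fun t (ht : t ≠ 0) => ?_)
  field_simp
  ring

theorem generalizedVandermondeDet_ratio_limit_general (n : ℕ) (x a : Fin n → ℂ)
    (ha : (∏ i : Fin n, ∏ j ∈ Finset.Ioi i, (a j - a i)) ≠ 0) :
    Tendsto
      (fun t : ℂ =>
        Matrix.det (Matrix.of fun i j : Fin n => Complex.exp ((a i * t) * Complex.log (x j))) /
          ∏ i : Fin n, ∏ j ∈ Finset.Ioi i, (a j * t - a i * t))
      (𝓝[≠] 0)
      (𝓝 ((∏ k : Fin n, (1 : ℂ) / (((k : ℕ).factorial : ℂ))) *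
        ∏ i : Fin n, ∏ j ∈ Finset.Ioi i, (Complex.log (x j) - Complex.log (x i)))) := by
  set L : Fin n → ℂ := fun j => Complex.log (x j)
  have hdet (t : ℂ) : det (of fun i j => Complex.exp ((a i * t) * L j)) =
      ∑ σ : Perm (Fin n), Perm.sign σ * Complex.exp (t * ∑ i, a (σ i) * L i) := by
    simp only [det_of_exp_mul, mul_sum, mul_assoc, mul_left_comm t]
  have hden (t : ℂ) : ∏ i : Fin n, ∏ j ∈ Ioi i, (a j * t - a i * t) =
      det (vandermonde a) * t ^ ∑ i : Fin n, (i : ℕ) := by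
    rw [← det_vandermonde, det_vandermonde_mul_const]
  have hlim := (tendsto_div_pow_nhdsNE_of_isLittleO <| Complex.isLittleO_sum_mul_exp_mul_sub
    (fun σ : Perm (Fin n) => (Perm.sign σ : ℂ)) (fun σ => ∑ i, a (σ i) * L i) _
    fun k hk => alternatingPowerSum_eq_zero_of_lt a L hk).div_const (det (vandermonde a))
  rw [← det_vandermonde] at ha
  convert hlim using 2 with t
  · rw [hdet, hden, mul_comm, div_div]
  · rw [← alternatingPowerSum, alternatingPowerSum_sum_val, ← det_vandermonde (fun j => L j),
      ← Nat.cast_multinomial_div_factorial_sum]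
    field_simp

/-- For `n ≥ 2`, `x, a ∈ ℂⁿ` with all `x_j ≠ 0` and `vₙ(a) = ∏_{i<j}(a_j - a_i) ≠ 0`, as
`t → 0` (`t ≠ 0`) the ratio `gₙ(x, a t) / vₙ(a t)` tends to
`(∏_{k=1}^n 1/(k-1)!) ∏_{1 ≤ i < j ≤ n} (log x_j - log x_i)`. -/
theorem generalizedVandermondeDet_ratio_limit (n : ℕ) (hn : 2 ≤ n) (x a : Fin n → ℂ)
    (hx : ∀ j, x j ≠ 0)
    (ha : (∏ i : Fin n, ∏ j ∈ Finset.Ioi i, (a j - a i)) ≠ 0) :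
    Tendsto
      (fun t : ℂ =>
        Matrix.det (Matrix.of fun i j : Fin n => Complex.exp ((a i * t) * Complex.log (x j))) /
          ∏ i : Fin n, ∏ j ∈ Finset.Ioi i, (a j * t - a i * t))
      (𝓝[≠] 0)
      (𝓝 ((∏ k : Fin n, (1 : ℂ) / (((k : ℕ).factorial : ℂ))) *
        ∏ i : Fin n, ∏ j ∈ Finset.Ioi i, (Complex.log (x j) - Complex.log (x i)))) :=
  generalizedVandermondeDet_ratio_limit_general n x a ha
end
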